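/- Let Ĝ be a finite simple graph, U ⊆ V(Ĝ), O = V(Ĝ) ∖ U, r ≥ 2, c ≥ 1 and k natural numbers. Let G' be obtained from Ĝ by adding new vertices a₁, a₂, b₁, …, b_c, adding the edges a₂b₁, …, a₂b_c, connecting a₁ to every vertex of O by a path of length r (each such connection using its own r−1 new internal vertices), and connecting a₁ to a₂ by a path of length r−1. Then G' has an (r,c)-scattered set of size at least k+c if and only if there is a set I ⊆ U of size at least k with |N^r_{Ĝ}[v] ∩ I| ≤ c for every vertex v of Ĝ. -/

import Mathlib

/-- Graph obtained from `G` by adding new vertices `B` and, for each `p : P`, a fresh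
path of length `len p` from `src p` to `dst p`: the path has `len p - 1` new internal
vertices (the pairs `⟨p, i⟩`); a connection of length `1` is just an edge. -/
def SimpleGraph.addPaths {V : Type*} (G : SimpleGraph V) (B P : Type*)
    (src dst : P → V ⊕ B) (len : P → ℕ) :
    SimpleGraph ((V ⊕ B) ⊕ (Σ p : P, Fin (len p - 1))) :=
  SimpleGraph.fromRel (fun x y =>
    (∃ u w, G.Adj u w ∧ x = .inl (.inl u) ∧ y = .inl (.inl w)) ∨
    (∃ p : P, len p = 1 ∧ x = .inl (src p) ∧ y = .inl (dst p)) ∨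
    (∃ p : P, ∃ i : Fin (len p - 1), (i : ℕ) = 0 ∧ x = .inl (src p) ∧ y = .inr ⟨p, i⟩) ∨
    (∃ p : P, ∃ i j : Fin (len p - 1), (i : ℕ) + 1 = (j : ℕ) ∧ x = .inr ⟨p, i⟩ ∧ y = .inr ⟨p, j⟩) ∨
    (∃ p : P, ∃ i : Fin (len p - 1), (i : ℕ) + 2 = len p ∧ x = .inr ⟨p, i⟩ ∧ y = .inl (dst p)))

/- New end-vertices for statement 8: `a₁ = .inl 0`, `a₂ = .inl 1` (in `Fin 2`) and
`b₁, …, b_c = .inr i` (in `Fin c`).  Connections: for each `o ∈ O = Uᶜ` a path of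
length `r` from `a₁` to `o`; a path of length `r − 1` from `a₁` to `a₂`; and the
edges `a₂bᵢ` (connections of length `1`). -/

/-- Sources of the added connections. -/
def src8 {V : Type*} [Fintype V] [DecidableEq V] (U : Finset V) (c : ℕ) :
    ({o : V // o ∈ Uᶜ} ⊕ (Unit ⊕ Fin c)) → V ⊕ (Fin 2 ⊕ Fin c)
  | .inl _ => .inr (.inl 0)          -- a₁–o paths start at a₁
  | .inr (.inl _) => .inr (.inl 0)   -- a₁–a₂ path starts at a₁
  | .inr (.inr _) => .inr (.inl 1)   -- edges a₂bᵢ start at a₂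

/-- Targets of the added connections. -/
def dst8 {V : Type*} [Fintype V] [DecidableEq V] (U : Finset V) (c : ℕ) :
    ({o : V // o ∈ Uᶜ} ⊕ (Unit ⊕ Fin c)) → V ⊕ (Fin 2 ⊕ Fin c)
  | .inl o => .inl o.1
  | .inr (.inl _) => .inr (.inl 1)
  | .inr (.inr i) => .inr (.inr i)

/-- Lengths of the added connections. -/
def len8 {V : Type*} [Fintype V] [DecidableEq V] (U : Finset V) (c r : ℕ) :
    ({o : V // o ∈ Uᶜ} ⊕ (Unit ⊕ Fin c)) → ℕ
  | .inl _ => r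
  | .inr (.inl _) => r - 1
  | .inr (.inr _) => 1

/-!
Every vertex of `G'` outside `U` is within distance `r` of `a₁`, so an `(r, c)`-scattered set of
`G'` of size `k + c` has at least `k` vertices in `U`, and these remain scattered in `Ĝ` because
walks of `Ĝ` are walks of `G'`. Conversely, for `I ⊆ U` take `I ∪ {b₁, …, b_c}`. Vertices of `U`
are farther than `r` from `a₁` (which is at distance `r` from `O`), hence also from `a₂`, the `bⱼ`
and the `a₁`–`a₂` path. So a walk of length at most `r` from `u ∈ U` avoids `a₁`, and dropping its
excursions into the `a₁`–`o` paths shows that `u` is within distance `r` in `Ĝ` of the foot of its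
end (the end itself, or `o` for an end on the `a₁`–`o` path). Likewise the `bⱼ` are farther than
`r` from `Ĝ` and from the `a₁`–`o` paths. Hence every `r`-ball of `G'` meets `I ∪ {b₁, …, b_c}`
either in (the image of) an `r`-ball of `Ĝ` intersected with `I`, or inside `{b₁, …, b_c}`. All
distance bounds come from explicit potentials that change by at most one along every edge.
-/

namespace SimpleGraph

variable {V : Type*} {G : SimpleGraph V}

theorem Walk.le_add_length_of_adj (φ : V → ℕ)
    (hφ : ∀ x y, G.Adj x y → φ x ≤ φ y + 1) :
    ∀ {u v : V} (w : G.Walk u v), φ u ≤ φ v + w.length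
  | _, _, .nil => by simp
  | _, _, .cons h w => by
    have := hφ _ _ h
    have := w.le_add_length_of_adj φ hφ
    rw [Walk.length_cons]
    omega

section CappedDist

variable (G) (n : ℕ)

/-- The distance from `v` to `u` capped at `n`, hence `n` when `u` is unreachable. -/
noncomputable def cappedDist (v u : V) : ℕ :=
  sInf {m | m = n ∨ ∃ w : G.Walk v u, w.length = m}

variable {G n}

theorem cappedDist_le_cap (v u : V) : G.cappedDist n v u ≤ n :=
  Nat.sInf_le (Or.inl rfl)

theorem cappedDist_self (u : V) : G.cappedDist n u u = 0 :=
  Nat.eq_zero_of_le_zero (Nat.sInf_le (Or.inr ⟨.nil, rfl⟩))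

theorem cappedDist_le_length {v u : V} (w : G.Walk v u) : G.cappedDist n v u ≤ w.length :=
  Nat.sInf_le (Or.inr ⟨w, rfl⟩)

theorem cappedDist_mem (v u : V) :
    G.cappedDist n v u = n ∨ ∃ w : G.Walk v u, w.length = G.cappedDist n v u :=
  Nat.sInf_mem (s := {m | m = n ∨ ∃ w : G.Walk v u, w.length = m}) ⟨n, Or.inl rfl⟩

theorem exists_walk_of_cappedDist_lt {v u : V} (h : G.cappedDist n v u < n) :
    ∃ w : G.Walk v u, w.length = G.cappedDist n v u :=
  (cappedDist_mem v u).resolve_left h.ne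

theorem cappedDist_le_add_one_of_adj {v w u : V} (h : G.Adj v w) :
    G.cappedDist n v u ≤ G.cappedDist n w u + 1 := by
  rcases cappedDist_mem (G := G) (n := n) w u with hw | ⟨p, hp⟩
  · have := cappedDist_le_cap (G := G) (n := n) v u
    omega
  · exact hp ▸ cappedDist_le_length (.cons h p)

theorem cappedDist_pos {v u : V} (hn : 0 < n) (hvu : v ≠ u) : 0 < G.cappedDist n v u := by
  refine Nat.pos_of_ne_zero fun h0 => ?_
  obtain ⟨w, hw⟩ := exists_walk_of_cappedDist_lt (h0 ▸ hn : G.cappedDist n v u < n)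
  exact hvu (Walk.eq_of_length_eq_zero (hw.trans h0))

end CappedDist

section Scattered

variable {W : Type*} {H : SimpleGraph W} {r c : ℕ}

def IsScattered (G : SimpleGraph V) (r c : ℕ) (I : Set V) : Prop :=
  ∀ v, ({y | ∃ w : G.Walk y v, w.length ≤ r} ∩ I).ncard ≤ c

theorem IsScattered.subset [Finite V] {I J : Set V} (h : G.IsScattered r c I) (hJ : J ⊆ I) :
    G.IsScattered r c J :=
  fun v => (Set.ncard_le_ncard (Set.inter_subset_inter_right _ hJ)).trans (h v)

theorem IsScattered.comap [Finite W] {I : Set W} (f : G →g H) (hf : Function.Injective f)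
    (h : H.IsScattered r c I) : G.IsScattered r c (f ⁻¹' I) := by
  intro v
  calc _ = (f '' ({y | ∃ w : G.Walk y v, w.length ≤ r} ∩ f ⁻¹' I)).ncard :=
        (Set.ncard_image_of_injective _ hf).symm
    _ ≤ ({y | ∃ w : H.Walk y (f v), w.length ≤ r} ∩ I).ncard := Set.ncard_le_ncard ?_
    _ ≤ c := h (f v)
  rintro _ ⟨y, ⟨⟨w, hw⟩, hy⟩, rfl⟩
  exact ⟨⟨w.map f, by simpa using hw⟩, hy⟩

end Scattered

section AddPaths

variable {B P : Type*} {src dst : P → V ⊕ B} {len : P → ℕ}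

def addPathsIncl : G →g G.addPaths B P src dst len where
  toFun v := .inl (.inl v)
  map_rel' h := (fromRel_adj _ _ _).2 ⟨by simpa using h.ne, .inl (.inl ⟨_, _, h, rfl, rfl⟩)⟩

@[simp]
theorem addPathsIncl_apply (v : V) :
    (addPathsIncl : G →g G.addPaths B P src dst len) v = .inl (.inl v) :=
  rfl

theorem addPathsIncl_injective :
    Function.Injective (addPathsIncl : G →g G.addPaths B P src dst len) :=
  fun _ _ h => by simpa using h

theorem addPaths_le_add_one_of_adj (φ : (V ⊕ B) ⊕ (Σ p : P, Fin (len p - 1)) → ℕ)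
    (hG : ∀ u w, G.Adj u w → φ (.inl (.inl u)) ≤ φ (.inl (.inl w)) + 1)
    (hedge : ∀ p, len p = 1 →
      φ (.inl (src p)) ≤ φ (.inl (dst p)) + 1 ∧ φ (.inl (dst p)) ≤ φ (.inl (src p)) + 1)
    (hfirst : ∀ p (i : Fin (len p - 1)), (i : ℕ) = 0 →
      φ (.inl (src p)) ≤ φ (.inr ⟨p, i⟩) + 1 ∧
        φ (.inr ⟨p, i⟩) ≤ φ (.inl (src p)) + 1)
    (hstep : ∀ p (i j : Fin (len p - 1)), (i : ℕ) + 1 = j →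
      φ (.inr ⟨p, i⟩) ≤ φ (.inr ⟨p, j⟩) + 1 ∧
        φ (.inr ⟨p, j⟩) ≤ φ (.inr ⟨p, i⟩) + 1)
    (hlast : ∀ p (i : Fin (len p - 1)), (i : ℕ) + 2 = len p →
      φ (.inr ⟨p, i⟩) ≤ φ (.inl (dst p)) + 1 ∧
        φ (.inl (dst p)) ≤ φ (.inr ⟨p, i⟩) + 1) :
    ∀ x y, (G.addPaths B P src dst len).Adj x y → φ x ≤ φ y + 1 := by
  intro x y hxy
  rcases ((fromRel_adj _ _ _).1 hxy).2 with
    (⟨u, w, h, rfl, rfl⟩ | ⟨p, h, rfl, rfl⟩ | ⟨p, i, h, rfl, rfl⟩ |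
      ⟨p, i, j, h, rfl, rfl⟩ | ⟨p, i, h, rfl, rfl⟩) |
    (⟨u, w, h, rfl, rfl⟩ | ⟨p, h, rfl, rfl⟩ | ⟨p, i, h, rfl, rfl⟩ |
      ⟨p, i, j, h, rfl, rfl⟩ | ⟨p, i, h, rfl, rfl⟩)
  exacts [hG u w h, (hedge p h).1, (hfirst p i h).1, (hstep p i j h).1, (hlast p i h).1,
    hG w u h.symm, (hedge p h).2, (hfirst p i h).2, (hstep p i j h).2, (hlast p i h).2]

theorem addPaths_exists_walk_inr_src (p : P) (i : Fin (len p - 1)) :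
    ∃ w : (G.addPaths B P src dst len).Walk (.inr ⟨p, i⟩) (.inl (src p)),
      w.length = (i : ℕ) + 1 := by
  obtain ⟨i, hi⟩ := i
  induction i with
  | zero =>
    have h : (G.addPaths B P src dst len).Adj (.inl (src p)) (.inr ⟨p, ⟨0, hi⟩⟩) :=
      (fromRel_adj _ _ _).2 ⟨by simp, .inl (.inr (.inr (.inl ⟨p, _, rfl, rfl, rfl⟩)))⟩
    exact ⟨.cons h.symm .nil, rfl⟩
  | succ i ih =>
    obtain ⟨w, hw⟩ := ih (by omega)
    have h : (G.addPaths B P src dst len).Adj (.inr ⟨p, ⟨i, by omega⟩⟩)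
        (.inr ⟨p, ⟨i + 1, hi⟩⟩) :=
      (fromRel_adj _ _ _).2 ⟨by simp,
        .inl (.inr (.inr (.inr (.inl ⟨p, _, _, rfl, rfl, rfl⟩))))⟩
    exact ⟨.cons h.symm w, by simp [hw]⟩

theorem addPaths_exists_walk_dst_src (p : P) (hp : 1 ≤ len p) (hne : src p ≠ dst p) :
    ∃ w : (G.addPaths B P src dst len).Walk (.inl (dst p)) (.inl (src p)),
      w.length = len p := by
  rcases hp.eq_or_lt with h1 | h2
  · have h : (G.addPaths B P src dst len).Adj (.inl (src p)) (.inl (dst p)) :=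
      (fromRel_adj _ _ _).2 ⟨by simpa using hne, .inl (.inr (.inl ⟨p, h1.symm, rfl, rfl⟩))⟩
    exact ⟨.cons h.symm .nil, by simp [← h1]⟩
  · obtain ⟨w, hw⟩ : ∃ w : (G.addPaths B P src dst len).Walk _ (.inl (src p)),
        w.length = len p - 2 + 1 :=
      addPaths_exists_walk_inr_src p ⟨len p - 2, by omega⟩
    have h : (G.addPaths B P src dst len).Adj (.inr ⟨p, ⟨len p - 2, by omega⟩⟩)
        (.inl (dst p)) :=
      (fromRel_adj _ _ _).2 ⟨by simp,
        .inl (.inr (.inr (.inr (.inr ⟨p, _, by simp; omega, rfl, rfl⟩))))⟩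
    exact ⟨.cons h.symm w, by simp [hw]; omega⟩

end AddPaths

end SimpleGraph

section Gadget

open SimpleGraph

variable {V : Type*} [Fintype V] [DecidableEq V]

abbrev GadgetVert (U : Finset V) (c r : ℕ) : Type _ :=
  (V ⊕ (Fin 2 ⊕ Fin c)) ⊕
    (Σ p : ({o : V // o ∈ Uᶜ} ⊕ (Unit ⊕ Fin c)), Fin (len8 U c r p - 1))

abbrev gadget (Ghat : SimpleGraph V) (U : Finset V) (c r : ℕ) :
    SimpleGraph (GadgetVert U c r) :=
  Ghat.addPaths (Fin 2 ⊕ Fin c) ({o : V // o ∈ Uᶜ} ⊕ (Unit ⊕ Fin c))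
    (src8 U c) (dst8 U c) (len8 U c r)

variable {Ghat : SimpleGraph V} {U : Finset V} {c r : ℕ}

variable (Ghat) in
/-- A lower bound, capped at `r + 1`, for the distance to `u`; `capDistToLeaves` is the analogue
for the set of the `bⱼ`. -/
noncomputable def capDistTo (u : V) : GadgetVert U c r → ℕ
  | .inl (.inl v) => Ghat.cappedDist (r + 1) v u
  | .inl (.inr (.inl j)) => if j = 0 ∧ u ∉ U then r else r + 1
  | .inl (.inr (.inr _)) => r + 1
  | .inr ⟨.inl o, i⟩ => min (r + 1) (Ghat.cappedDist (r + 1) o u + (r - 1 - i))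
  | .inr ⟨.inr _, _⟩ => r + 1

def capDistToLeaves : GadgetVert U c r → ℕ
  | .inl (.inl _) => r + 1
  | .inl (.inr (.inl j)) => if j = 0 then r else 1
  | .inl (.inr (.inr _)) => 0
  | .inr ⟨.inl _, _⟩ => r + 1
  | .inr ⟨.inr _, i⟩ => r - 1 - i

theorem capDistTo_le_add_one (hr : 2 ≤ r) (u : V) :
    ∀ x y, (gadget Ghat U c r).Adj x y → capDistTo Ghat u x ≤ capDistTo Ghat u y + 1 := by
  have hcap (v : V) := cappedDist_le_cap (G := Ghat) (n := r + 1) v u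
  have hpos (o : {o : V // o ∈ Uᶜ}) (hu : u ∈ U) : 0 < Ghat.cappedDist (r + 1) o u :=
    cappedDist_pos r.succ_pos fun h => Finset.mem_compl.1 o.2 (h ▸ hu)
  apply addPaths_le_add_one_of_adj
  · exact fun v w h => cappedDist_le_add_one_of_adj h
  · rintro (o | _ | j) h <;> simp [capDistTo, len8, src8, dst8] at h ⊢ <;> split_ifs <;>
      omega
  · rintro (o | _ | j) ⟨i, hi⟩ h0
    · simp [capDistTo, len8, src8] at hi h0 ⊢
      have := hcap o
      split_ifs with hu
      · have := hpos o hu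
        omega
      · omega
    · simp [capDistTo, src8]; split_ifs <;> omega
    · simp [len8] at hi
  · rintro (o | _ | j) ⟨i, hi⟩ ⟨j, hj⟩ h <;> simp [capDistTo, len8] at hi hj h ⊢
    omega
  · rintro (o | _ | j) ⟨i, hi⟩ h <;> simp [capDistTo, len8, dst8] at hi h ⊢
    have := hcap o
    omega

theorem capDistToLeaves_le_add_one :
    ∀ x y, (gadget Ghat U c r).Adj x y → capDistToLeaves x ≤ capDistToLeaves y + 1 := by
  apply addPaths_le_add_one_of_adj
  · exact fun _ _ _ => Nat.le_succ _
  · rintro (o | _ | j) h <;> simp [capDistToLeaves, len8, src8, dst8] at h ⊢ <;> omega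
  · rintro (o | _ | j) ⟨i, hi⟩ h0 <;> simp [capDistToLeaves, len8, src8] at hi h0 ⊢ <;>
      omega
  · rintro (o | _ | j) ⟨i, hi⟩ ⟨j, hj⟩ h <;> simp [capDistToLeaves, len8] at hi hj h ⊢
    omega
  · rintro (o | _ | j) ⟨i, hi⟩ h <;> simp [capDistToLeaves, len8, dst8] at hi h ⊢
    omega

def foot : GadgetVert U c r → Option V
  | .inl (.inl v) => some v
  | .inr ⟨.inl o, _⟩ => some o.1
  | _ => none

theorem exists_foot_of_walk (hr : 2 ≤ r) {u : V} (hu : u ∈ U) {x : GadgetVert U c r}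
    (w : (gadget Ghat U c r).Walk (.inl (.inl u)) x) (hw : w.length ≤ r) :
    ∃ v, foot x = some v ∧ ∃ q : Ghat.Walk u v, q.length ≤ r := by
  have h : capDistTo Ghat u x ≤ r := by
    have h0 : capDistTo Ghat u (.inl (.inl u) : GadgetVert U c r) = 0 := cappedDist_self u
    have := w.reverse.le_add_length_of_adj _ (capDistTo_le_add_one hr u)
    rw [h0, Walk.length_reverse] at this
    omega
  rcases x with ((v | j | j) | ⟨(o | _ | j), i⟩) <;> simp [capDistTo, hu] at h
  · obtain ⟨q, hq⟩ := exists_walk_of_cappedDist_lt (Nat.lt_succ_of_le h)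
    exact ⟨v, rfl, q.reverse, by simpa [hq]⟩
  · obtain ⟨q, hq⟩ := exists_walk_of_cappedDist_lt (G := Ghat) (n := r + 1) (v := o) (u := u)
      (by omega)
    exact ⟨o, rfl, q.reverse, by simp only [Walk.length_reverse]; omega⟩

theorem foot_eq_none_of_walk_from_leaf (j : Fin c) {x : GadgetVert U c r}
    (w : (gadget Ghat U c r).Walk (.inl (.inr (.inr j))) x) (hw : w.length ≤ r) :
    foot x = none := by
  have := w.reverse.le_add_length_of_adj _ capDistToLeaves_le_add_one
  rcases x with ((v | j | j) | ⟨(o | _ | j), i⟩) <;>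
    simp [capDistToLeaves, foot] at this ⊢ <;> omega

theorem gadget_exists_walk_dst_src (p : {o : V // o ∈ Uᶜ} ⊕ (Unit ⊕ Fin c))
    (hp : 1 ≤ len8 U c r p) :
    ∃ w : (gadget Ghat U c r).Walk (.inl (dst8 U c p)) (.inl (src8 U c p)),
      w.length = len8 U c r p :=
  addPaths_exists_walk_dst_src p hp (by rcases p with (_ | _ | _) <;> simp [src8, dst8])

theorem exists_walk_to_a₁ (hr : 2 ≤ r) (x : GadgetVert U c r)
    (hx : ∀ u ∈ U, x ≠ .inl (.inl u)) :
    ∃ w : (gadget Ghat U c r).Walk x (.inl (.inr (.inl 0))), w.length ≤ r := by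
  obtain ⟨w₂, hw₂⟩ : ∃ w : (gadget Ghat U c r).Walk (.inl (.inr (.inl 1)))
      (.inl (.inr (.inl 0))), w.length = r - 1 :=
    gadget_exists_walk_dst_src (.inr (.inl ())) (by simp [len8]; omega)
  rcases x with ((v | j | j) | ⟨(o | _ | j), i⟩)
  · have hv : v ∈ Uᶜ := Finset.mem_compl.2 fun hv => hx v hv rfl
    obtain ⟨w, hw⟩ := gadget_exists_walk_dst_src (Ghat := Ghat) (r := r) (.inl ⟨v, hv⟩)
      (by simp [len8]; omega)
    exact ⟨w, hw.le⟩
  · fin_cases j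
    · exact ⟨.nil, by simp⟩
    · exact ⟨w₂, by omega⟩
  · obtain ⟨w₁, hw₁⟩ : ∃ w : (gadget Ghat U c r).Walk (.inl (.inr (.inr j)))
        (.inl (.inr (.inl 1))), w.length = 1 :=
      gadget_exists_walk_dst_src (.inr (.inr j)) le_rfl
    exact ⟨w₁.append w₂, by simp only [Walk.length_append]; omega⟩
  · obtain ⟨w, hw⟩ : ∃ w : (gadget Ghat U c r).Walk _ (.inl (.inr (.inl 0))),
        w.length = (i : ℕ) + 1 :=
      addPaths_exists_walk_inr_src _ i
    exact ⟨w, by have := i.isLt; simp only [len8] at this; omega⟩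
  · obtain ⟨w, hw⟩ : ∃ w : (gadget Ghat U c r).Walk _ (.inl (.inr (.inl 0))),
        w.length = (i : ℕ) + 1 :=
      addPaths_exists_walk_inr_src _ i
    exact ⟨w, by have := i.isLt; simp only [len8] at this; omega⟩
  · exact (Nat.not_lt_zero _ i.isLt).elim

theorem exists_isScattered_of_gadget (hr : 2 ≤ r) {k : ℕ} {I' : Set (GadgetVert U c r)}
    (hI' : (gadget Ghat U c r).IsScattered r c I') (hk : k + c ≤ I'.ncard) :
    ∃ I ⊆ (U : Set V), k ≤ I.ncard ∧ Ghat.IsScattered r c I := by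
  set ι : Ghat →g gadget Ghat U c r := addPathsIncl
  refine ⟨U ∩ ι ⁻¹' I', Set.inter_subset_left, ?_,
    (hI'.comap ι addPathsIncl_injective).subset Set.inter_subset_right⟩
  have hcover : I' ⊆ ({y | ∃ w : (gadget Ghat U c r).Walk y (.inl (.inr (.inl 0))),
      w.length ≤ r} ∩ I') ∪ ι '' (U ∩ ι ⁻¹' I') := by
    intro x hx
    by_cases h : ∃ u ∈ U, x = .inl (.inl u)
    · obtain ⟨u, hu, rfl⟩ := h
      exact Or.inr ⟨u, ⟨hu, hx⟩, rfl⟩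
    · exact Or.inl ⟨exists_walk_to_a₁ hr x fun u hu hxu => h ⟨u, hu, hxu⟩, hx⟩
  have := (Set.ncard_le_ncard hcover).trans (Set.ncard_union_le _ _)
  rw [Set.ncard_image_of_injective _ addPathsIncl_injective] at this
  have := hI' (.inl (.inr (.inl 0)))
  omega

variable (c r) in
def leaves : Set (GadgetVert U c r) := Set.range fun j => .inl (.inr (.inr j))

theorem ncard_leaves : (leaves (U := U) c r).ncard = c := by
  rw [leaves, Set.ncard_range_of_injective (fun _ _ h => by simpa using h)]
  simp

theorem gadget_isScattered (hr : 2 ≤ r) {I : Set V} (hIU : I ⊆ U)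
    (hI : Ghat.IsScattered r c I) :
    (gadget Ghat U c r).IsScattered r c
      ((addPathsIncl : Ghat →g gadget Ghat U c r) '' I ∪ leaves c r) := by
  intro x
  cases hx : foot x with
  | none =>
    refine (Set.ncard_le_ncard ?_).trans ncard_leaves.le
    rintro _ ⟨⟨w, hw⟩, ⟨u, hu, rfl⟩ | hy⟩
    · obtain ⟨v, hv, -⟩ := exists_foot_of_walk hr (hIU hu) w hw
      simp [hx] at hv
    · exact hy
  | some v =>
    calc _ ≤ ((addPathsIncl : Ghat →g gadget Ghat U c r) ''
          ({y | ∃ w : Ghat.Walk y v, w.length ≤ r} ∩ I)).ncard := Set.ncard_le_ncard ?_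
      _ = _ := Set.ncard_image_of_injective _ addPathsIncl_injective
      _ ≤ c := hI v
    rintro _ ⟨⟨w, hw⟩, ⟨u, hu, rfl⟩ | ⟨j, rfl⟩⟩
    · obtain ⟨v', hv', q, hq⟩ := exists_foot_of_walk hr (hIU hu) w hw
      obtain rfl : v' = v := Option.some_injective _ (hv'.symm.trans hx)
      exact ⟨u, ⟨⟨q, hq⟩, hu⟩, rfl⟩
    · simp [foot_eq_none_of_walk_from_leaf j w hw] at hx

theorem ncard_image_union_leaves (I : Set V) :
    ((addPathsIncl : Ghat →g gadget Ghat U c r) '' I ∪ leaves c r).ncard = I.ncard + c := by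
  rw [Set.ncard_union_eq, Set.ncard_image_of_injective _ addPathsIncl_injective, ncard_leaves]
  rw [Set.disjoint_left]
  rintro _ ⟨u, -, rfl⟩ ⟨j, hj⟩
  simp at hj

end Gadget

theorem scattered_kernel_back_general {V : Type*} [Fintype V] [DecidableEq V]
    (Ghat : SimpleGraph V) (U : Finset V) (r c k : ℕ) (hr : 2 ≤ r) :
    (∃ I' : Set ((V ⊕ (Fin 2 ⊕ Fin c)) ⊕
          (Σ p : ({o : V // o ∈ Uᶜ} ⊕ (Unit ⊕ Fin c)), Fin (len8 U c r p - 1))),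
        k + c ≤ I'.ncard ∧
        ∀ x, ({y | ∃ w : (Ghat.addPaths (Fin 2 ⊕ Fin c) ({o : V // o ∈ Uᶜ} ⊕ (Unit ⊕ Fin c))
                (src8 U c) (dst8 U c) (len8 U c r)).Walk y x, w.length ≤ r} ∩ I').ncard ≤ c) ↔
    (∃ I : Set V, I ⊆ (U : Set V) ∧ k ≤ I.ncard ∧
        ∀ v : V, ({y : V | ∃ w : Ghat.Walk y v, w.length ≤ r} ∩ I).ncard ≤ c) := by
  constructor
  · rintro ⟨I', hk, hI'⟩
    exact exists_isScattered_of_gadget hr hI' hk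
  · rintro ⟨I, hIU, hk, hI⟩
    refine ⟨_, ?_, gadget_isScattered hr hIU hI⟩
    rw [ncard_image_union_leaves]
    omega

/-- Let `G'` be obtained from `Ĝ` by adding new vertices
`a₁, a₂, b₁, …, b_c`, the edges `a₂b₁, …, a₂b_c`, connecting `a₁` to every vertex of
`O = V(Ĝ) ∖ U` by a path of length `r`, and `a₁` to `a₂` by a path of length `r − 1`.
Then `G'` has an `(r,c)`-scattered set of size at least `k + c` iff there is `I ⊆ U` of
size at least `k` with `|N^r_Ĝ[v] ∩ I| ≤ c` for every vertex `v` of `Ĝ`. -/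
theorem scattered_kernel_back {V : Type*} [Fintype V] [DecidableEq V]
    (Ghat : SimpleGraph V) (U : Finset V) (r c k : ℕ) (hr : 2 ≤ r) (hc : 1 ≤ c) :
    (∃ I' : Set ((V ⊕ (Fin 2 ⊕ Fin c)) ⊕
          (Σ p : ({o : V // o ∈ Uᶜ} ⊕ (Unit ⊕ Fin c)), Fin (len8 U c r p - 1))),
        k + c ≤ I'.ncard ∧
        ∀ x, ({y | ∃ w : (Ghat.addPaths (Fin 2 ⊕ Fin c) ({o : V // o ∈ Uᶜ} ⊕ (Unit ⊕ Fin c))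
                (src8 U c) (dst8 U c) (len8 U c r)).Walk y x, w.length ≤ r} ∩ I').ncard ≤ c) ↔
    (∃ I : Set V, I ⊆ (U : Set V) ∧ k ≤ I.ncard ∧
        ∀ v : V, ({y : V | ∃ w : Ghat.Walk y v, w.length ≤ r} ∩ I).ncard ≤ c) :=
  scattered_kernel_back_general Ghat U r c k hr
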